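/- Let p be a strongly irreducible ℤ^d-invariant transition kernel on ℤ^d × {1,…,N}, let 𝓕 be the interior of the set of u for which all entries of F(u) are finite, and let λ : 𝓕 → ℝ be such that for every u ∈ 𝓕 there is a vector C(u) with all entries positive satisfying F(u)C(u) = λ(u)C(u). Assume (Assumption 1) the set D = {u ∈ 𝓕 : λ(u) ≤ 1} is compact, and (Assumption 2) there exists u ∈ 𝓕 with λ(u) < 1. Then the Green function is everywhere finite: for all x,y ∈ ℤ^d and all k,j ∈ {1,…,N}, G_{k,j}(x,y) = ∑_{n≥0} p^{(n)}_{k,j}(x,y) < ∞. -/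

import Mathlib

open scoped ENNReal
open Filter Topology

noncomputable section

/-- Convolution powers of a `ℤ^d`-invariant kernel on `ℤ^d × {1,…,N}`, where
`q z k j = p_{k,j}(0,z)`; `p^{(n)}_{k,j}(x,y)` is `convPow q n (y-x) k j`. -/
def convPow {d N : ℕ} (q : (Fin d → ℤ) → Fin N → Fin N → ℝ≥0∞) :
    ℕ → (Fin d → ℤ) → Fin N → Fin N → ℝ≥0∞
  | 0 => fun z k j => if z = 0 ∧ k = j then 1 else 0
  | n + 1 => fun z k j => ∑' w : Fin d → ℤ, ∑ l : Fin N, q w k l * convPow q n (z - w) l j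

/-- Strong irreducibility: for all `x, y, k, j` there is `n₀` with `p^{(n)}_{k,j}(x,y) > 0` for
all `n ≥ n₀`. -/
def StronglyIrreducibleKer {d N : ℕ} (q : (Fin d → ℤ) → Fin N → Fin N → ℝ≥0∞) : Prop :=
  ∀ (z : Fin d → ℤ) (k j : Fin N), ∃ n₀ : ℕ, ∀ n ≥ n₀, 0 < convPow q n z k j

/-- (Weak) irreducibility: for all `x, y, k, j` there is `n` with `p^{(n)}_{k,j}(x,y) > 0`. -/
def IrreducibleKer {d N : ℕ} (q : (Fin d → ℤ) → Fin N → Fin N → ℝ≥0∞) : Prop :=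
  ∀ (z : Fin d → ℤ) (k j : Fin N), ∃ n : ℕ, 0 < convPow q n z k j

/-- Finitely supported kernel: `{(y,j) : p_{k,j}(0,y) > 0}` is finite for each `k`. -/
def FinSuppKer {d N : ℕ} (q : (Fin d → ℤ) → Fin N → Fin N → ℝ≥0∞) : Prop :=
  ∀ k : Fin N, {zj : (Fin d → ℤ) × Fin N | q zj.1 k zj.2 ≠ 0}.Finite

/-- `u · z` for `u ∈ ℝ^d`, `z ∈ ℤ^d`. -/
def dotZ {d : ℕ} (u : Fin d → ℝ) (z : Fin d → ℤ) : ℝ := ∑ i, u i * (z i : ℝ)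

/-- The matrix `F(u)` with entries `F_{k,j}(u) = ∑_{x∈ℤ^d} p_{k,j}(0,x) e^{u·x} ∈ [0,∞]`. -/
def Fmat {d N : ℕ} (q : (Fin d → ℤ) → Fin N → Fin N → ℝ≥0∞) (u : Fin d → ℝ) :
    Matrix (Fin N) (Fin N) ℝ≥0∞ :=
  Matrix.of fun k j => ∑' z : Fin d → ℤ, q z k j * ENNReal.ofReal (Real.exp (dotZ u z))

/-- The real matrix `F(u)` (meaningful when all entries are finite). -/
def FmatR {d N : ℕ} (q : (Fin d → ℤ) → Fin N → Fin N → ℝ≥0∞) (u : Fin d → ℝ) :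
    Matrix (Fin N) (Fin N) ℝ :=
  Matrix.of fun k j => (Fmat q u k j).toReal

/-- The continuous linear map `v ↦ ∑ i, m i * v i`, i.e. the linear form with gradient `m`. -/
def dotCLM {d : ℕ} (m : Fin d → ℝ) : (Fin d → ℝ) →L[ℝ] ℝ :=
  ∑ i, m i • (ContinuousLinearMap.proj i : (Fin d → ℝ) →L[ℝ] ℝ)

/-- The drift vector `p⃗ = ∑_{x} ∑_{k,j} ν₀(k)·x·p_{k,j}(0,x)`. -/
def driftVec {d N : ℕ} (q : (Fin d → ℤ) → Fin N → Fin N → ℝ≥0∞) (ν₀ : Fin N → ℝ) :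
    Fin d → ℝ :=
  fun i => ∑' z : Fin d → ℤ, ∑ k, ∑ j, ν₀ k * (z i : ℝ) * (q z k j).toReal

/-- Euclidean norm on `ℤ^d`. -/
def eNormZ {d : ℕ} (z : Fin d → ℤ) : ℝ := Real.sqrt (∑ i, ((z i : ℝ)) ^ 2)

/-- Euclidean norm on `ℝ^d`. -/
def eNormR {d : ℕ} (v : Fin d → ℝ) : ℝ := Real.sqrt (∑ i, (v i) ^ 2)

/-- The value of the quadratic form associated to a symmetric matrix. -/
def quadVal {d : ℕ} (M : Matrix (Fin d) (Fin d) ℝ) (v : Fin d → ℝ) : ℝ :=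
  dotProduct v (M.mulVec v)


lemma dotZ_sub {d : ℕ} (u : Fin d → ℝ) (a b : Fin d → ℤ) :
    dotZ u (a - b) = dotZ u a - dotZ u b := by
  simp only [dotZ, ← Finset.sum_sub_distrib]
  refine Finset.sum_congr rfl fun i _ => ?_
  push_cast [Pi.sub_apply]
  ring

/-- The tilted `n`-step kernel sum `V n k = ∑_z p^{(n)}_{k,j}(0,z) e^{u·z}` satisfies
`V (n+1) = F(u) · V n`. -/
lemma conv_step {d N : ℕ} (q : (Fin d → ℤ) → Fin N → Fin N → ℝ≥0∞) (u : Fin d → ℝ)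
    (j : Fin N) (n : ℕ) (k : Fin N) :
    (∑' z : Fin d → ℤ, convPow q (n+1) z k j * ENNReal.ofReal (Real.exp (dotZ u z)))
    = ∑ l, Fmat q u k l *
        ∑' z : Fin d → ℤ, convPow q n z l j * ENNReal.ofReal (Real.exp (dotZ u z)) := by
  set e : (Fin d → ℤ) → ℝ≥0∞ := fun z => ENNReal.ofReal (Real.exp (dotZ u z)) with he
  have hmul : ∀ z w : Fin d → ℤ, e z = e w * e (z - w) := by
    intro z w
    rw [he]
    simp only [dotZ_sub, ← ENNReal.ofReal_mul (Real.exp_nonneg _), ← Real.exp_add]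
    ring_nf
  calc (∑' z : Fin d → ℤ, convPow q (n+1) z k j * e z)
      = ∑' z : Fin d → ℤ, ∑' w : Fin d → ℤ,
          ∑ l, q w k l * convPow q n (z - w) l j * e z := by
        refine tsum_congr fun z => ?_
        rw [show convPow q (n+1) z k j
            = ∑' w : Fin d → ℤ, ∑ l, q w k l * convPow q n (z - w) l j from rfl,
          ← ENNReal.tsum_mul_right]
        exact tsum_congr fun w => by rw [Finset.sum_mul]
    _ = ∑' w : Fin d → ℤ, ∑' z : Fin d → ℤ,
          ∑ l, q w k l * convPow q n (z - w) l j * e z := ENNReal.tsum_comm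
    _ = ∑' w : Fin d → ℤ, ∑ l, q w k l * e w *
          ∑' z : Fin d → ℤ, convPow q n z l j * e z := by
        refine tsum_congr fun w => ?_
        rw [Summable.tsum_finsetSum fun l _ => ENNReal.summable]
        refine Finset.sum_congr rfl fun l _ => ?_
        calc (∑' z : Fin d → ℤ, q w k l * convPow q n (z - w) l j * e z)
            = ∑' z : Fin d → ℤ, q w k l * e w * (convPow q n (z - w) l j * e (z - w)) := by
              refine tsum_congr fun z => ?_
              rw [hmul z w]; ring
          _ = q w k l * e w * ∑' z : Fin d → ℤ, convPow q n (z - w) l j * e (z - w) :=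
              ENNReal.tsum_mul_left
          _ = q w k l * e w * ∑' z : Fin d → ℤ, convPow q n z l j * e z := by
              congr 1
              exact (Equiv.subRight w).tsum_eq fun z => convPow q n z l j * e z
    _ = ∑ l, (∑' w : Fin d → ℤ, q w k l * e w) *
          ∑' z : Fin d → ℤ, convPow q n z l j * e z := by
        rw [Summable.tsum_finsetSum fun l _ => ENNReal.summable]
        exact Finset.sum_congr rfl fun l _ => ENNReal.tsum_mul_right
    _ = _ := by
        refine Finset.sum_congr rfl fun l _ => ?_
        rfl

lemma conv_zero {d N : ℕ} (q : (Fin d → ℤ) → Fin N → Fin N → ℝ≥0∞) (u : Fin d → ℝ)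
    (j k : Fin N) :
    (∑' z : Fin d → ℤ, convPow q 0 z k j * ENNReal.ofReal (Real.exp (dotZ u z)))
    = if k = j then 1 else 0 := by
  rw [tsum_eq_single (0 : Fin d → ℤ)]
  · simp only [convPow]
    by_cases h : k = j <;> simp [h, dotZ]
  · intro z hz
    simp only [convPow]
    rw [if_neg (fun h => hz h.1), zero_mul]

/-- for a strongly irreducible `ℤ^d`-invariant transition kernel on
`ℤ^d × {1,…,N}`, if the Perron eigenvalue `λ` (admitting positive eigenvectors on `𝓕`) has
compact sublevel set `D = {u ∈ 𝓕 : λ(u) ≤ 1}` (Assumption 1) and takes a value `< 1` on `𝓕`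
(Assumption 2), then the Green function is everywhere finite. -/
theorem stmt7 {d N : ℕ} (hN : 0 < N) (q : (Fin d → ℤ) → Fin N → Fin N → ℝ≥0∞)
    (hfin : ∀ z k j, q z k j ≠ ⊤)
    (hrow : ∀ k : Fin N, (∑' z : Fin d → ℤ, ∑ j, q z k j) ≠ ⊤)
    (hirr : StronglyIrreducibleKer q)
    (lam : (Fin d → ℝ) → ℝ)
    (𝓕 : Set (Fin d → ℝ))
    (h𝓕 : 𝓕 = interior {u : Fin d → ℝ | ∀ k j, Fmat q u k j ≠ ⊤})
    (heig : ∀ u ∈ 𝓕, ∃ C : Fin N → ℝ,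
      (∀ k, 0 < C k) ∧ (FmatR q u).mulVec C = lam u • C)
    (hD : IsCompact {u : Fin d → ℝ | u ∈ 𝓕 ∧ lam u ≤ 1})
    (hlt : ∃ u ∈ 𝓕, lam u < 1) :
    ∀ (x y : Fin d → ℤ) (k j : Fin N), (∑' n : ℕ, convPow q n (y - x) k j) ≠ ⊤ := by
  intro x y k j
  obtain ⟨u, hu𝓕, hlam⟩ := hlt
  have hFfin : ∀ k j : Fin N, Fmat q u k j ≠ ⊤ := by
    have : u ∈ interior {u : Fin d → ℝ | ∀ k j, Fmat q u k j ≠ ⊤} := h𝓕 ▸ hu𝓕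
    exact interior_subset this
  obtain ⟨C, hCpos, hCeig⟩ := heig u hu𝓕
  -- λ u ≥ 0
  have hCeig' : ∀ k, ∑ l, (Fmat q u k l).toReal * C l = lam u * C k := by
    intro k
    have := congrFun hCeig k
    simpa [Matrix.mulVec, dotProduct, FmatR, mul_comm] using this
  have hlam0 : 0 ≤ lam u := by
    have h := hCeig' k
    have hsum : 0 ≤ ∑ l, (Fmat q u k l).toReal * C l :=
      Finset.sum_nonneg fun l _ => mul_nonneg ENNReal.toReal_nonneg (hCpos l).le
    nlinarith [hCpos k, h ▸ hsum]
  -- eigenvector equation in ℝ≥0∞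
  have heigE : ∀ k, ∑ l, Fmat q u k l * ENNReal.ofReal (C l)
      = ENNReal.ofReal (lam u) * ENNReal.ofReal (C k) := by
    intro k
    have : ∀ l, Fmat q u k l * ENNReal.ofReal (C l)
        = ENNReal.ofReal ((Fmat q u k l).toReal * C l) := by
      intro l
      rw [ENNReal.ofReal_mul ENNReal.toReal_nonneg, ENNReal.ofReal_toReal (hFfin k l)]
    simp only [this]
    rw [← ENNReal.ofReal_sum_of_nonneg
        (fun l _ => mul_nonneg ENNReal.toReal_nonneg (hCpos l).le), hCeig' k,
      ← ENNReal.ofReal_mul hlam0]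
  set V : ℕ → Fin N → ℝ≥0∞ := fun n k =>
    ∑' z : Fin d → ℤ, convPow q n z k j * ENNReal.ofReal (Real.exp (dotZ u z)) with hV
  have hVbound : ∀ n k, V n k * ENNReal.ofReal (C j)
      ≤ ENNReal.ofReal (lam u) ^ n * ENNReal.ofReal (C k) := by
    intro n
    induction n with
    | zero =>
      intro k
      rw [hV]
      simp only [conv_zero, pow_zero, one_mul]
      by_cases h : k = j
      · subst h; simp
      · simp [h]
    | succ n ih =>
      intro k
      rw [hV]
      simp only
      rw [conv_step q u j n k, Finset.sum_mul]
      calc (∑ l, Fmat q u k l * V n l * ENNReal.ofReal (C j))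
          ≤ ∑ l, Fmat q u k l * (ENNReal.ofReal (lam u) ^ n * ENNReal.ofReal (C l)) := by
            refine Finset.sum_le_sum fun l _ => ?_
            rw [mul_assoc]
            exact mul_le_mul_right (ih l) _
        _ = ENNReal.ofReal (lam u) ^ n * ∑ l, Fmat q u k l * ENNReal.ofReal (C l) := by
            rw [Finset.mul_sum]
            exact Finset.sum_congr rfl fun l _ => by ring
        _ = ENNReal.ofReal (lam u) ^ (n+1) * ENNReal.ofReal (C k) := by
            rw [heigE k, pow_succ]; ring
  -- bound each term
  set z : Fin d → ℤ := y - x with hz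
  set B : ℝ≥0∞ := ENNReal.ofReal (Real.exp (dotZ u z)) * ENNReal.ofReal (C j) with hB
  have hB0 : B ≠ 0 := by
    rw [hB]
    exact mul_ne_zero (ENNReal.ofReal_pos.mpr (Real.exp_pos _)).ne'
      (ENNReal.ofReal_pos.mpr (hCpos j)).ne'
  have hBtop : B ≠ ⊤ := by
    rw [hB]
    exact ENNReal.mul_ne_top ENNReal.ofReal_ne_top ENNReal.ofReal_ne_top
  have hterm : ∀ n, convPow q n z k j ≤ ENNReal.ofReal (lam u) ^ n * ENNReal.ofReal (C k) / B := by
    intro n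
    rw [ENNReal.le_div_iff_mul_le (Or.inl hB0) (Or.inl hBtop)]
    calc convPow q n z k j * B
        = convPow q n z k j * ENNReal.ofReal (Real.exp (dotZ u z)) * ENNReal.ofReal (C j) := by
          rw [hB, mul_assoc]
      _ ≤ V n k * ENNReal.ofReal (C j) :=
          mul_le_mul_left (ENNReal.le_tsum z) _
      _ ≤ _ := hVbound n k
  have hlt1 : ENNReal.ofReal (lam u) < 1 := by
    rw [← ENNReal.ofReal_one]
    exact ENNReal.ofReal_lt_ofReal_iff_of_nonneg hlam0 |>.mpr hlam
  have hgeom : (∑' n : ℕ, ENNReal.ofReal (lam u) ^ n) ≠ ⊤ := by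
    rw [ENNReal.tsum_geometric]
    simp only [ne_eq, ENNReal.inv_eq_top, tsub_eq_zero_iff_le]
    exact not_le.mpr hlt1
  refine ne_top_of_le_ne_top ?_ (ENNReal.tsum_le_tsum hterm)
  have : (∑' n : ℕ, ENNReal.ofReal (lam u) ^ n * ENNReal.ofReal (C k) / B)
      = (∑' n : ℕ, ENNReal.ofReal (lam u) ^ n) * ENNReal.ofReal (C k) / B := by
    simp_rw [div_eq_mul_inv, ← ENNReal.tsum_mul_right]
  rw [this, div_eq_mul_inv]
  exact ENNReal.mul_ne_top (ENNReal.mul_ne_top hgeom ENNReal.ofReal_ne_top)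
    (ENNReal.inv_ne_top.mpr hB0)
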